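/- Let M̂ be the Brylawski–Ziegler matroid union constructed from a rank-r matroid M on E with basis {1,…,r} and auxiliary sets A, B. If X is a cocircuit of M̂ with X ∩ A = ∅, then X ∩ E is a cocircuit of the dual matroid M*. -/

import Mathlib

open Set Matroid
namespace NL
variable {γ : Type*}

/-- Rank of a set in a matroid: the max size of an independent subset. -/
noncomputable def rk (M : Matroid γ) (X : Set γ) : ℕ :=
  sSup {n | ∃ I, M.Indep I ∧ I ⊆ X ∧ I.ncard = n}

/-- A cocircuit: a minimal set meeting every base. -/
def Cocircuit (M : Matroid γ) (D : Set γ) : Prop :=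
  D ⊆ M.E ∧ (∀ B, M.IsBase B → (D ∩ B).Nonempty) ∧
    ∀ D' ⊂ D, ∃ B, M.IsBase B ∧ D' ∩ B = ∅

/-- A loop: an element contained in no independent set. -/
def MLoop (M : Matroid γ) (e : γ) : Prop := e ∈ M.E ∧ ¬ M.Indep {e}

/-- Parallel elements: distinct non-loops forming a dependent pair. -/
def MParallel (M : Matroid γ) (e f : γ) : Prop :=
  e ≠ f ∧ M.Indep {e} ∧ M.Indep {f} ∧ ¬ M.Indep {e, f}

/-- Deletion of the set `X`. -/
noncomputable def mdelete (M : Matroid γ) (X : Set γ) : Matroid γ := M ↾ (M.E \ X)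

/-- Contraction of the set `X`, defined by duality. -/
noncomputable def mcontract (M : Matroid γ) (X : Set γ) : Matroid γ := (M✶ ↾ (M✶.E \ X))✶

/-- `X` is a union of cocircuits of `M` (equivalently, the complement of a flat). -/
def UnionOfCocircuits (M : Matroid γ) (X : Set γ) : Prop :=
  ∃ S : Set (Set γ), (∀ D ∈ S, Cocircuit M D) ∧ X = ⋃₀ S

/-- The rank of `X` in the lattice of unions of cocircuits of `M` ordered by
inclusion: the maximal length of a chain from `∅` to `X` in this lattice. -/
noncomputable def latticeRk (M : Matroid γ) (X : Set γ) : ℕ :=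
  sSup {k | ∃ c : Fin (k+1) → Set γ, StrictMono c ∧ (∀ i, UnionOfCocircuits M (c i)) ∧
    c 0 = ∅ ∧ c (Fin.last k) = X}

/-!
A base of `M₁` (the copy `A` of `E₁`) consisting of loops of `M₂` turns every base `B₂` of `M₂`
into the base `A ∪ B₂` of `M̂`, while every base of `M̂` contains a base of `M₂`; so a cocircuit of
`M̂` avoiding `A` is a cocircuit of `M₂`. Outside `E` every element of `M₂` is a loop or parallel
to an element of `E`, and the complement of a cocircuit is a flat, so contains the parallel
partners of its members. Hence a base of `M₂` meeting `X` only in `x ∈ E` can be moved into `E`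
without meeting `X` elsewhere, which makes `X ∩ E` a cocircuit of `M₂ ↾ E = M✶`.
-/

section Parallel

variable {N : Matroid γ} {e f : γ} {B S E X : Set γ}

lemma MParallel.symm (h : MParallel N e f) : MParallel N f e :=
  ⟨h.1.symm, h.2.2.1, h.2.1, by rw [pair_comm]; exact h.2.2.2⟩

lemma MParallel.mem_closure_singleton (h : MParallel N e f) : e ∈ N.closure {f} :=
  h.2.2.1.mem_closure_iff'.2 ⟨h.2.1.subset_ground rfl, fun hef => absurd hef h.2.2.2⟩

lemma MParallel.mem_closure_of_mem (h : MParallel N e f) (hf : f ∈ S) : e ∈ N.closure S :=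
  N.closure_subset_closure (singleton_subset_iff.2 hf) h.mem_closure_singleton

lemma MLoop.isLoop (h : MLoop N e) : N.IsLoop e :=
  singleton_dep.1 ⟨h.2, singleton_subset_iff.2 h.1⟩

lemma spanning_of_isBase_subset_closure (hB : N.IsBase B) (hBS : B ⊆ N.closure S)
    (hS : S ⊆ N.E) : N.Spanning S := by
  rw [spanning_iff_ground_subset_closure hS, ← hB.closure_eq]
  exact N.closure_subset_closure_of_subset_closure hBS

lemma spanning_of_forall_loop_or_parallel (hE : E ⊆ N.E)
    (hout : ∀ y ∈ N.E \ E, MLoop N y ∨ ∃ e ∈ E, MParallel N y e) : N.Spanning E := by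
  rw [spanning_iff_ground_subset_closure hE]
  intro y hy
  by_cases hyE : y ∈ E
  · exact N.subset_closure E hE hyE
  obtain hloop | ⟨e, he, hpar⟩ := hout y ⟨hy, hyE⟩
  · exact hloop.isLoop.mem_closure E
  · exact hpar.mem_closure_of_mem he

lemma isBase_image_of_parallel {f : γ → γ} (hB : N.IsBase B) (hfin : B.Finite) (hf : InjOn f B)
    (hpar : ∀ e ∈ B, MParallel N e (f e)) : N.IsBase (f '' B) := by
  have hground : f '' B ⊆ N.E :=
    image_subset_iff.2 fun e he => (hpar e he).2.2.1.subset_ground rfl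
  have hspan : N.Spanning (f '' B) :=
    spanning_of_isBase_subset_closure hB
      (fun e he => (hpar e he).mem_closure_of_mem (mem_image_of_mem f he)) hground
  obtain ⟨B', hB', hB'sub⟩ := hspan.exists_isBase_subset
  have hcard : (f '' B).encard ≤ B'.encard := by
    rw [hf.encard_image, hB.encard_eq_encard_of_isBase hB']
  rwa [← (hfin.image f).subset hB'sub |>.eq_of_subset_of_encard_le hB'sub hcard]

lemma Cocircuit.exists_isBase_inter_subset (hX : Cocircuit N X) (he : e ∈ X) :
    ∃ B, N.IsBase B ∧ B ∩ X ⊆ {e} := by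
  obtain ⟨B, hB, hBX⟩ := hX.2.2 (X \ {e}) (sdiff_singleton_ssubset.2 he)
  exact ⟨B, hB, fun y ⟨hyB, hyX⟩ => by_contra fun hye =>
    eq_empty_iff_forall_notMem.1 hBX y ⟨⟨hyX, hye⟩, hyB⟩⟩

/-- The complement of a cocircuit is a flat. -/
lemma Cocircuit.mem_of_parallel (hX : Cocircuit N X) (he : e ∈ X) (hpar : MParallel N e f) :
    f ∈ X := by
  by_contra hf
  obtain ⟨B, hB, hBX⟩ := hX.exists_isBase_inter_subset he
  have hBcl : B ⊆ N.closure (N.E \ X) := by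
    intro y hy
    by_cases hye : y = e
    · exact hye ▸ hpar.mem_closure_of_mem ⟨hpar.2.2.1.subset_ground rfl, hf⟩
    · exact N.subset_closure _ sdiff_subset ⟨hB.subset_ground hy, fun hyX => hye (hBX ⟨hy, hyX⟩)⟩
  obtain ⟨B', hB', hB'X⟩ :=
    (spanning_of_isBase_subset_closure hB hBcl sdiff_subset).exists_isBase_subset
  obtain ⟨y, hyX, hyB'⟩ := hX.2.1 B' hB'
  exact (hB'X hyB').2 hyX

lemma Cocircuit.inter_restrict (hE : E ⊆ N.E)
    (hout : ∀ y ∈ N.E \ E, MLoop N y ∨ ∃ e ∈ E, MParallel N y e) (hX : Cocircuit N X) :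
    Cocircuit (N ↾ E) (X ∩ E) := by
  have hbase : ∀ B, (N ↾ E).IsBase B ↔ N.IsBase B ∧ B ⊆ E := fun B =>
    (spanning_of_forall_loop_or_parallel hE hout).isBase_restrict_iff
  refine ⟨inter_subset_right, fun B hB => ?_, fun D hD => ?_⟩
  · obtain ⟨hB, hBE⟩ := (hbase B).1 hB
    obtain ⟨y, hyX, hyB⟩ := hX.2.1 B hB
    exact ⟨y, ⟨hyX, hBE hyB⟩, hyB⟩
  obtain ⟨x, ⟨hxX, hxE⟩, hxD⟩ := exists_of_ssubset hD
  obtain ⟨B₀, hB₀, hB₀X⟩ := hX.exists_isBase_inter_subset hxX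
  have hB₀cl : B₀ ⊆ N.closure (E \ (X \ {x})) := by
    intro y hy
    by_cases hyE : y ∈ E
    · exact N.subset_closure _ (sdiff_subset.trans hE) ⟨hyE, fun hyX => hyX.2 (hB₀X ⟨hy, hyX.1⟩)⟩
    obtain hloop | ⟨e, he, hpar⟩ := hout y ⟨hB₀.subset_ground hy, hyE⟩
    · exact hloop.isLoop.mem_closure _
    · have hyX : y ∉ X := fun hyX => hyE (mem_singleton_iff.1 (hB₀X ⟨hy, hyX⟩) ▸ hxE)
      exact hpar.mem_closure_of_mem ⟨he, fun heX => hyX (hX.mem_of_parallel heX.1 hpar.symm)⟩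
  obtain ⟨B, hB, hBS⟩ :=
    (spanning_of_isBase_subset_closure hB₀ hB₀cl (sdiff_subset.trans hE)).exists_isBase_subset
  refine ⟨B, (hbase B).2 ⟨hB, hBS.trans sdiff_subset⟩, eq_empty_of_forall_notMem ?_⟩
  rintro y ⟨hyD, hyB⟩
  exact (hBS hyB).2 ⟨(hD.subset hyD).1, by rintro rfl; exact hxD hyD⟩

end Parallel

/-- `N` is the matroid union `N₁ ∨ N₂`. -/
def IsUnion (N N₁ N₂ : Matroid γ) : Prop :=
  ∀ I, N.Indep I ↔ ∃ I₁ I₂, N₁.Indep I₁ ∧ N₂.Indep I₂ ∧ I = I₁ ∪ I₂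

section IsUnion

variable {N N₁ N₂ : Matroid γ}

lemma IsUnion.isBase_union (hU : IsUnion N N₁ N₂) {B₁ B₂ : Set γ} (h₁ : N₁.IsBase B₁)
    (h₂ : N₂.IsBase B₂) (hdisj : Disjoint B₁ B₂) (hfin : (B₁ ∪ B₂).Finite) :
    N.IsBase (B₁ ∪ B₂) := by
  rw [isBase_iff_maximal_indep]
  refine ⟨(hU _).2 ⟨B₁, B₂, h₁.indep, h₂.indep, rfl⟩, fun J hJ hsub => ?_⟩
  obtain ⟨J₁, J₂, hJ₁, hJ₂, rfl⟩ := (hU J).1 hJ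
  refine (hfin.eq_of_subset_of_encard_le hsub ?_).ge
  calc (J₁ ∪ J₂).encard ≤ J₁.encard + J₂.encard := encard_union_le _ _
    _ ≤ B₁.encard + B₂.encard := by
      rw [h₁.encard_eq_eRank, h₂.encard_eq_eRank]
      exact add_le_add hJ₁.encard_le_eRank hJ₂.encard_le_eRank
    _ = (B₁ ∪ B₂).encard := (encard_union_eq hdisj).symm

lemma IsUnion.exists_isBase_subset (hU : IsUnion N N₁ N₂) {B : Set γ} (hB : N.IsBase B) :
    ∃ B₂, N₂.IsBase B₂ ∧ B₂ ⊆ B := by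
  obtain ⟨I₁, I₂, hI₁, hI₂, rfl⟩ := (hU B).1 hB.indep
  obtain ⟨B₂, hB₂, hI₂B₂⟩ := hI₂.exists_isBase_superset
  have hBeq : I₁ ∪ I₂ = I₁ ∪ B₂ := hB.eq_of_subset_indep
    ((hU _).2 ⟨I₁, B₂, hI₁, hB₂.indep, rfl⟩) (union_subset_union_right _ hI₂B₂)
  exact ⟨B₂, hB₂, hBeq ▸ subset_union_right⟩

lemma IsUnion.cocircuit_right (hU : IsUnion N N₁ N₂) [N₂.RankFinite] (hE : N.E ⊆ N₂.E)
    {A X : Set γ} (hA : N₁.IsBase A) (hAfin : A.Finite) (hAloop : ∀ a ∈ A, MLoop N₂ a)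
    (hX : Cocircuit N X) (hXA : X ∩ A = ∅) : Cocircuit N₂ X := by
  refine ⟨hX.1.trans hE, fun B₂ hB₂ => ?_, fun D hD => ?_⟩
  · have hdisj : Disjoint A B₂ := disjoint_left.2 fun a ha =>
      (hAloop a ha).isLoop.notMem_of_indep hB₂.indep
    obtain ⟨y, hyX, hyA | hyB⟩ := hX.2.1 _ (hU.isBase_union hA hB₂ hdisj (hAfin.union hB₂.finite))
    · exact (eq_empty_iff_forall_notMem.1 hXA y ⟨hyX, hyA⟩).elim
    · exact ⟨y, hyX, hyB⟩
  obtain ⟨B, hB, hDB⟩ := hX.2.2 D hD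
  obtain ⟨B₂, hB₂, hB₂B⟩ := hU.exists_isBase_subset hB
  exact ⟨B₂, hB₂, subset_empty_iff.1 (hDB ▸ inter_subset_inter_right D hB₂B)⟩

end IsUnion

lemma forall_loop_or_parallel_of_copies {N : Matroid ℕ} {n : ℕ} (hE : N.E = Icc 1 (2 * n))
    (h : ∀ i ∈ Icc 1 n, MLoop N (n + i) ∨ MParallel N (n + i) i) :
    ∀ y ∈ N.E \ Icc 1 n, MLoop N y ∨ ∃ e ∈ Icc 1 n, MParallel N y e := by
  rintro y ⟨hy, hyn⟩
  rw [hE, mem_Icc] at hy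
  rw [mem_Icc] at hyn
  obtain ⟨i, rfl⟩ : ∃ i, y = n + i := ⟨y - n, by omega⟩
  exact (h i ⟨by omega, by omega⟩).imp_right fun hpar => ⟨i, ⟨by omega, by omega⟩, hpar⟩

theorem bz_cocircuit_restricts_dual_general
    (n r : ℕ) (M M₁ M₂ Mhat : Matroid ℕ)
    (hMB : M.IsBase (Set.Icc 1 r))
    (hE1 : M₁.E = Set.Icc 1 (2*n)) (hres1 : M₁ ↾ (Set.Icc 1 n) = M)
    (hpar1 : ∀ i ∈ Set.Icc 1 r, MParallel M₁ i (n+i))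
    (hloop1 : ∀ i ∈ Set.Icc (r+1) n, MLoop M₁ (n+i))
    (hE2 : M₂.E = Set.Icc 1 (2*n)) (hres2 : M₂ ↾ (Set.Icc 1 n) = M✶)
    (hpar2 : ∀ i ∈ Set.Icc (r+1) n, MParallel M₂ i (n+i))
    (hloop2 : ∀ i ∈ Set.Icc 1 r, MLoop M₂ (n+i))
    (hEh : Mhat.E = Set.Icc 1 (2*n))
    (hU : ∀ I, Mhat.Indep I ↔ ∃ I₁ I₂, M₁.Indep I₁ ∧ M₂.Indep I₂ ∧ I = I₁ ∪ I₂)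
    (X : Set ℕ) (hX : Cocircuit Mhat X) (hXA : X ∩ Set.Icc (n+1) (n+r) = ∅) :
    Cocircuit M✶ (X ∩ Set.Icc 1 n) := by
  have hcopies₁ : ∀ i ∈ Icc 1 n, MLoop M₁ (n + i) ∨ MParallel M₁ (n + i) i := fun i hi =>
    (le_or_gt i r).elim (fun h => Or.inr (hpar1 i ⟨hi.1, h⟩).symm)
      (fun h => Or.inl (hloop1 i ⟨h, hi.2⟩))
  have hcopies₂ : ∀ i ∈ Icc 1 n, MLoop M₂ (n + i) ∨ MParallel M₂ (n + i) i := fun i hi =>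
    (le_or_gt i r).elim (fun h => Or.inl (hloop2 i ⟨hi.1, h⟩))
      (fun h => Or.inr (hpar2 i ⟨h, hi.2⟩).symm)
  have hEsub : Icc 1 n ⊆ Icc 1 (2 * n) := Icc_subset_Icc_right (by omega)
  have hE₁ : M₁.IsBase (Icc 1 r) := by
    rw [← hres1, (spanning_of_forall_loop_or_parallel (hE1 ▸ hEsub)
      (forall_loop_or_parallel_of_copies hE1 hcopies₁)).isBase_restrict_iff] at hMB
    exact hMB.1
  have hA : M₁.IsBase ((n + ·) '' Icc 1 r) :=
    isBase_image_of_parallel hE₁ (finite_Icc 1 r) (add_right_injective n).injOn hpar1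
  have : M₂.Finite := ⟨hE2 ▸ finite_Icc 1 (2 * n)⟩
  rw [← image_const_add_Icc] at hXA
  have hX₂ : Cocircuit M₂ X := IsUnion.cocircuit_right hU (hEh.trans hE2.symm).subset hA
    ((finite_Icc 1 r).image _) (forall_mem_image.2 hloop2) hX hXA
  rw [← hres2]
  exact hX₂.inter_restrict (hE2 ▸ hEsub) (forall_loop_or_parallel_of_copies hE2 hcopies₂)

/-- if `X` is a cocircuit of `M̂` with `X ∩ A = ∅`, then
`X ∩ E` is a cocircuit of the dual `M✶`. -/
theorem bz_cocircuit_restricts_dual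
    (n r : ℕ) (hrn : r ≤ n) (M M₁ M₂ Mhat : Matroid ℕ)
    (hME : M.E = Set.Icc 1 n) (hMB : M.IsBase (Set.Icc 1 r))
    (hE1 : M₁.E = Set.Icc 1 (2*n)) (hres1 : M₁ ↾ (Set.Icc 1 n) = M)
    (hpar1 : ∀ i ∈ Set.Icc 1 r, MParallel M₁ i (n+i))
    (hloop1 : ∀ i ∈ Set.Icc (r+1) n, MLoop M₁ (n+i))
    (hE2 : M₂.E = Set.Icc 1 (2*n)) (hres2 : M₂ ↾ (Set.Icc 1 n) = M✶)
    (hpar2 : ∀ i ∈ Set.Icc (r+1) n, MParallel M₂ i (n+i))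
    (hloop2 : ∀ i ∈ Set.Icc 1 r, MLoop M₂ (n+i))
    (hEh : Mhat.E = Set.Icc 1 (2*n))
    (hU : ∀ I, Mhat.Indep I ↔ ∃ I₁ I₂, M₁.Indep I₁ ∧ M₂.Indep I₂ ∧ I = I₁ ∪ I₂)
    (X : Set ℕ) (hX : Cocircuit Mhat X) (hXA : X ∩ Set.Icc (n+1) (n+r) = ∅) :
    Cocircuit M✶ (X ∩ Set.Icc 1 n) :=
  bz_cocircuit_restricts_dual_general n r M M₁ M₂ Mhat hMB hE1 hres1 hpar1 hloop1 hE2 hres2 hpar2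
    hloop2 hEh hU X hX hXA

end NL
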